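/- arXiv:math/0506079 — 5 statements merged into one kernel-verified Lean document; each statement's English description precedes it below -/
import Mathlib

section
/- With the notation above, the map E(L) := pr₋ ∘ (pr₊|_L)^{-1} defines a bijection between the set of p-dimensional subspaces L of V on which h is positive definite and the set of linear maps A : W₊ → W₋ such that Id − A*A is positive definite, where the adjoint A* is taken with respect to the positive definite forms h|_{W₊} and −h|_{W₋}. -/
/-!
A positive definite subspace meets `W₋` trivially, so by dimension count the `p`-dimensional ones
are exactly the complements of `W₋`, and these are the graphs `{w + A w}` of the linear maps
`A : W₊ → W₋`. By orthogonality `h(w + A w, w + A w) = h(w, w) + h(A w, A w) = h((1 - A*A) w, w)`,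
so the graph is positive definite iff `1 - A*A` is; the adjoint `A*` exists because `h` and `-h`
are inner products on `W₊` and `W₋`.
-/

open Module

namespace LinearMap

variable {R E : Type*} [Ring R] [AddCommGroup E] [Module R E] {p q : Submodule R E}

def graphIn (A : p →ₗ[R] q) : Submodule R E :=
  range (p.subtype + q.subtype ∘ₗ A)

theorem mem_graphIn {A : p →ₗ[R] q} {x : E} : x ∈ A.graphIn ↔ ∃ w : p, x = w + A w := by
  simp [graphIn, eq_comm]

theorem add_apply_mem_graphIn (A : p →ₗ[R] q) (w : p) : (w : E) + A w ∈ A.graphIn :=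
  mem_graphIn.2 ⟨w, rfl⟩

theorem coe_add_apply_eq_zero_iff (hpq : Disjoint p q) (A : p →ₗ[R] q) (w : p) :
    (w : E) + A w = 0 ↔ w = 0 := by
  refine ⟨fun hw => ?_, fun hw => by simp [hw]⟩
  have hwq : (w : E) ∈ q := by
    rw [add_eq_zero_iff_eq_neg] at hw
    exact hw ▸ q.neg_mem (A w).2
  exact Subtype.ext (Submodule.disjoint_def.1 hpq w w.2 hwq)

theorem isCompl_graphIn (hpq : IsCompl p q) (A : p →ₗ[R] q) : IsCompl A.graphIn q := by
  constructor
  · refine Submodule.disjoint_def.2 fun x hx hxq => ?_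
    obtain ⟨w, rfl⟩ := mem_graphIn.1 hx
    have hwq : (w : E) ∈ q := by simpa using q.sub_mem hxq (A w).2
    have hw : w = 0 := Subtype.ext (Submodule.disjoint_def.1 hpq.disjoint w w.2 hwq)
    simp [hw]
  · rw [codisjoint_iff_le_sup, ← hpq.codisjoint.eq_top]
    refine sup_le (fun w hw => Submodule.mem_sup.2 ?_) le_sup_right
    exact ⟨_, add_apply_mem_graphIn A ⟨w, hw⟩, _, q.neg_mem (A ⟨w, hw⟩).2, by simp⟩

/-- A complement `L` of `q` is the graph of `w ↦ -w_q`, where `w = w_L + w_q` along `L ⊕ q`: the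
point of `L` over `w ∈ p` is `w_L = w - w_q`, so this is `pr_q ∘ (pr_p|_L)⁻¹`. -/
noncomputable def graphInEquiv (hpq : IsCompl p q) :
    (p →ₗ[R] q) ≃ {L : Submodule R E // IsCompl L q} where
  toFun A := ⟨A.graphIn, isCompl_graphIn hpq A⟩
  invFun L := -(q.projectionOnto L L.2.symm ∘ₗ p.subtype)
  left_inv A := by
    ext w
    have hw : (w : E) = (w + A w) + (-(A w : E)) := by abel
    simp only [neg_apply, comp_apply, Submodule.subtype_apply]
    rw [hw, map_add, Submodule.projectionOnto_apply_of_mem_right _ (add_apply_mem_graphIn A w),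
      Submodule.projectionOnto_apply_of_mem_left _ (q.neg_mem (A w).2)]
    simp
  right_inv L := by
    refine Subtype.ext (eq_of_le_of_inf_le_of_sup_le (z := q) ?_ ?_ ?_)
    · rintro _ ⟨w, rfl⟩
      simp only [add_apply, comp_apply, neg_apply, Submodule.subtype_apply, Submodule.coe_neg,
        ← Submodule.projection_apply]
      rw [← sub_eq_add_neg, ← Submodule.projection_eq_self_sub_projection]
      exact Submodule.projection_apply_mem _ _
    · simp [L.2.inf_eq_bot]
    · simp [L.2.sup_eq_top, (isCompl_graphIn hpq _).sup_eq_top]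

end LinearMap

theorem Submodule.isCompl_iff_disjoint_and_finrank_eq {K V : Type*} [DivisionRing K]
    [AddCommGroup V] [Module K V] [FiniteDimensional K V] {p q L : Submodule K V}
    (hpq : IsCompl p q) : IsCompl L q ↔ Disjoint L q ∧ finrank K L = finrank K p := by
  have hp := Submodule.finrank_add_eq_of_isCompl hpq
  refine ⟨fun hL => ⟨hL.disjoint, ?_⟩,
    fun ⟨hL, hdim⟩ => (Submodule.isCompl_iff_disjoint _ _ ?_).2 hL⟩
  · have := Submodule.finrank_add_eq_of_isCompl hL
    omega
  · omega

theorem Submodule.disjoint_of_pos_of_neg {R V : Type*} [Ring R] [AddCommGroup V] [Module R V]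
    {h : V → V → ℂ} {L W : Submodule R V} (hL : ∀ x ∈ L, x ≠ 0 → 0 < (h x x).re)
    (hW : ∀ x ∈ W, x ≠ 0 → (h x x).re < 0) : Disjoint L W :=
  Submodule.disjoint_def.2 fun x hxL hxW => by
    by_contra hx
    exact lt_asymm (hL x hxL hx) (hW x hxW hx)

structure IsHermitianForm {G : Type*} [AddCommGroup G] [Module ℂ G] (b : G → G → ℂ) : Prop where
  add_left : ∀ x x' y, b (x + x') y = b x y + b x' y
  smul_left : ∀ (c : ℂ) x y, b (c • x) y = c * b x y
  conj_symm : ∀ x y, b x y = star (b y x)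

namespace IsHermitianForm

variable {G : Type*} [AddCommGroup G] [Module ℂ G] {b : G → G → ℂ}

theorem add_right (hb : IsHermitianForm b) (x y y' : G) : b x (y + y') = b x y + b x y' := by
  rw [hb.conj_symm, hb.add_left, star_add, ← hb.conj_symm, ← hb.conj_symm]

theorem zero_left (hb : IsHermitianForm b) (y : G) : b 0 y = 0 := by
  simpa using hb.smul_left 0 0 y

theorem apply_add_add_of_eq_zero (hb : IsHermitianForm b) {x y : G} (hxy : b x y = 0) :
    b (x + y) (x + y) = b x x + b y y := by
  rw [hb.add_left, hb.add_right, hb.add_right, hxy, hb.conj_symm y x, hxy]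
  simp

theorem comp_subtype (hb : IsHermitianForm b) (S : Submodule ℂ G) :
    IsHermitianForm fun x y : S => b x y :=
  ⟨fun x x' y => hb.add_left x x' y, fun c x y => hb.smul_left c x y, fun x y => hb.conj_symm x y⟩

theorem neg (hb : IsHermitianForm b) : IsHermitianForm fun x y => -b x y :=
  ⟨fun x x' y => by rw [hb.add_left, neg_add], fun c x y => by rw [hb.smul_left, mul_neg],
    fun x y => by rw [hb.conj_symm, star_neg]⟩

/-- Mathlib's inner products are conjugate-linear in the first argument, so the arguments of `b`
are swapped. -/
abbrev toCore (hb : IsHermitianForm b) (hpos : ∀ x, x ≠ 0 → 0 < (b x x).re) :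
    InnerProductSpace.Core ℂ G where
  inner x y := b y x
  conj_inner_symm x y := (hb.conj_symm y x).symm
  re_inner_nonneg x := by
    rcases eq_or_ne x 0 with rfl | hx
    · simp [hb.zero_left]
    · exact (hpos x hx).le
  add_left x y z := hb.add_right z x y
  smul_left x y r := by
    show b y (r • x) = star r * b y x
    rw [hb.conj_symm, hb.smul_left, star_mul', ← hb.conj_symm]
  definite x hx := by
    by_contra hne
    have := hpos x hne
    simp_all

theorem exists_adjoint {E F : Type*} [AddCommGroup E] [Module ℂ E] [FiniteDimensional ℂ E]
    [AddCommGroup F] [Module ℂ F] [FiniteDimensional ℂ F] {bE : E → E → ℂ} {bF : F → F → ℂ}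
    (hE : IsHermitianForm bE) (hEpos : ∀ x, x ≠ 0 → 0 < (bE x x).re)
    (hF : IsHermitianForm bF) (hFpos : ∀ x, x ≠ 0 → 0 < (bF x x).re) (A : E →ₗ[ℂ] F) :
    ∃ B : F →ₗ[ℂ] E, ∀ w v, bE (B w) v = bF w (A v) := by
  let cE := hE.toCore hEpos
  let cF := hF.toCore hFpos
  let : NormedAddCommGroup E := cE.toNormedAddCommGroup
  let : InnerProductSpace ℂ E := InnerProductSpace.ofCore cE.toCore
  let : NormedAddCommGroup F := cF.toNormedAddCommGroup
  let : InnerProductSpace ℂ F := InnerProductSpace.ofCore cF.toCore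
  refine ⟨LinearMap.adjoint A, fun w v => ?_⟩
  have key : bE v (LinearMap.adjoint A w) = bF (A v) w := LinearMap.adjoint_inner_left A v w
  rw [hE.conj_symm, key, ← hF.conj_symm]

end IsHermitianForm

section SplitForm

variable {V : Type*} [AddCommGroup V] [Module ℂ V] {h : V → V → ℂ} {Wp Wm : Submodule ℂ V}

theorem pos_on_graphIn_iff (hb : IsHermitianForm h) (hpq : Disjoint Wp Wm)
    (horth : ∀ x ∈ Wp, ∀ y ∈ Wm, h x y = 0) (A : Wp →ₗ[ℂ] Wm) :
    (∀ x ∈ A.graphIn, x ≠ 0 → 0 < (h x x).re) ↔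
      ∀ w : Wp, w ≠ 0 → 0 < (h w w + h (A w) (A w)).re := by
  have hsplit (w : Wp) : h (w + A w) (w + A w) = h w w + h (A w) (A w) :=
    hb.apply_add_add_of_eq_zero (horth _ w.2 _ (A w).2)
  constructor
  · intro hL w hw
    rw [← hsplit]
    exact hL _ (A.add_apply_mem_graphIn w) ((A.coe_add_apply_eq_zero_iff hpq w).not.2 hw)
  · rintro hA _ hx hx0
    obtain ⟨w, rfl⟩ := LinearMap.mem_graphIn.1 hx
    rw [hsplit]
    exact hA w (mt (fun hw => by simp [hw]) hx0)

theorem forall_adjoint_pos_iff [FiniteDimensional ℂ V] (hb : IsHermitianForm h)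
    (hpos : ∀ x ∈ Wp, x ≠ 0 → 0 < (h x x).re) (hneg : ∀ x ∈ Wm, x ≠ 0 → (h x x).re < 0)
    (A : Wp →ₗ[ℂ] Wm) :
    (∀ Astar : Wm →ₗ[ℂ] Wp, (∀ (w : Wm) (v : Wp), h (Astar w) v = -(h w (A v))) →
      ∀ v : Wp, v ≠ 0 → 0 < (h v v - h (Astar (A v)) v).re) ↔
      ∀ v : Wp, v ≠ 0 → 0 < (h v v + h (A v) (A v)).re := by
  have hsub (Astar : Wm →ₗ[ℂ] Wp) (hAstar : ∀ (w : Wm) (v : Wp), h (Astar w) v = -(h w (A v)))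
      (v : Wp) : h v v - h (Astar (A v)) v = h v v + h (A v) (A v) := by
    rw [hAstar, sub_neg_eq_add]
  refine ⟨fun hA => ?_, fun hA Astar hAstar v hv => hsub Astar hAstar v ▸ hA v hv⟩
  obtain ⟨Astar, hAstar⟩ := (hb.comp_subtype Wp).exists_adjoint
    (fun x hx => hpos x x.2 (by simpa using hx)) (hb.comp_subtype Wm).neg
    (fun x hx => by simpa using hneg x x.2 (by simpa using hx)) A
  exact fun v hv => hsub Astar hAstar v ▸ hA Astar hAstar v hv

end SplitForm

theorem stmt_2_general
    {V : Type*} [AddCommGroup V] [Module ℂ V] [FiniteDimensional ℂ V]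
    (p : ℕ)
    (h : V → V → ℂ)
    (hadd : ∀ x x' y : V, h (x + x') y = h x y + h x' y)
    (hsmul : ∀ (c : ℂ) (x y : V), h (c • x) y = c * h x y)
    (hherm : ∀ x y : V, h x y = star (h y x))
    (Wp Wm : Submodule ℂ V) (hcompl : IsCompl Wp Wm)
    (horth : ∀ x ∈ Wp, ∀ y ∈ Wm, h x y = 0)
    (hdimp : Module.finrank ℂ Wp = p)
    (hpos : ∀ x ∈ Wp, x ≠ 0 → 0 < (h x x).re)
    (hneg : ∀ x ∈ Wm, x ≠ 0 → (h x x).re < 0) :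
    ∃ e : {L : Submodule ℂ V // Module.finrank ℂ L = p ∧
              ∀ x ∈ L, x ≠ 0 → 0 < (h x x).re} ≃
          {A : ↥Wp →ₗ[ℂ] ↥Wm //
              ∀ Astar : ↥Wm →ₗ[ℂ] ↥Wp,
                (∀ (w : ↥Wm) (v : ↥Wp), h ↑(Astar w) ↑v = -(h ↑w ↑(A v))) →
                ∀ v : ↥Wp, v ≠ 0 → 0 < (h ↑v ↑v - h ↑(Astar (A v)) ↑v).re},
      ∀ L, ∀ x : V, x ∈ L.1 ↔ ∃ w : ↥Wp, x = ↑w + ↑((e L).1 w) := by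
  subst hdimp
  have hb : IsHermitianForm h := ⟨hadd, hsmul, hherm⟩
  let pos (L : Submodule ℂ V) : Prop := ∀ x ∈ L, x ≠ 0 → 0 < (h x x).re
  have hcompl_iff (L : Submodule ℂ V) (hL : pos L) :
      IsCompl L Wm ↔ finrank ℂ L = finrank ℂ Wp := by
    rw [Submodule.isCompl_iff_disjoint_and_finrank_eq hcompl]
    exact and_iff_right (Submodule.disjoint_of_pos_of_neg hL hneg)
  let e := (Equiv.subtypeEquivRight fun A => (forall_adjoint_pos_iff hb hpos hneg A).trans
      (pos_on_graphIn_iff hb hcompl.disjoint horth A).symm).trans <|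
    ((LinearMap.graphInEquiv hcompl).subtypeEquiv (q := fun L => pos L.1) fun _ => Iff.rfl).trans
      <| (Equiv.subtypeSubtypeEquivSubtypeInter _ pos).trans
      <| Equiv.subtypeEquivRight (q := fun L : Submodule ℂ V => finrank ℂ L = finrank ℂ Wp ∧ pos L)
        fun L => and_congr_left (hcompl_iff L)
  refine ⟨e.symm, fun L x => ?_⟩
  have hgraph : (e.symm L).1.graphIn = L.1 := congrArg Subtype.val (e.apply_symm_apply L)
  rw [← LinearMap.mem_graphIn, hgraph]

/-- The map `E(L) := pr₋ ∘ (pr₊|_L)⁻¹` is a bijection between the set of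
`p`-dimensional subspaces `L ⊆ V` on which `h` is positive definite and the set
of linear maps `A : W₊ → W₋` with `Id − A*A` positive definite, where `A*` is
the adjoint with respect to the unitary structures `h|_{W₊}` and `−h|_{W₋}`
(characterized by `h(A*w, v) = −h(w, A v)`).  The bijection is expressed by the
fact that `L` is the graph `{w + A(w) : w ∈ W₊}` of the corresponding `A`. -/
theorem stmt_2
    {V : Type*} [AddCommGroup V] [Module ℂ V] [FiniteDimensional ℂ V]
    (p q : ℕ) (hpq : p ≤ q) (hdim : Module.finrank ℂ V = p + q)
    (h : V → V → ℂ)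
    (hadd : ∀ x x' y : V, h (x + x') y = h x y + h x' y)
    (hsmul : ∀ (c : ℂ) (x y : V), h (c • x) y = c * h x y)
    (hherm : ∀ x y : V, h x y = star (h y x))
    (Wp Wm : Submodule ℂ V) (hcompl : IsCompl Wp Wm)
    (horth : ∀ x ∈ Wp, ∀ y ∈ Wm, h x y = 0)
    (hdimp : Module.finrank ℂ Wp = p) (hdimm : Module.finrank ℂ Wm = q)
    (hpos : ∀ x ∈ Wp, x ≠ 0 → 0 < (h x x).re)
    (hneg : ∀ x ∈ Wm, x ≠ 0 → (h x x).re < 0) :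
    ∃ e : {L : Submodule ℂ V // Module.finrank ℂ L = p ∧
              ∀ x ∈ L, x ≠ 0 → 0 < (h x x).re} ≃
          {A : ↥Wp →ₗ[ℂ] ↥Wm //
              ∀ Astar : ↥Wm →ₗ[ℂ] ↥Wp,
                (∀ (w : ↥Wm) (v : ↥Wp), h ↑(Astar w) ↑v = -(h ↑w ↑(A v))) →
                ∀ v : ↥Wp, v ≠ 0 → 0 < (h ↑v ↑v - h ↑(Astar (A v)) ↑v).re},
      ∀ L, ∀ x : V, x ∈ L.1 ↔ ∃ w : ↥Wp, x = ↑w + ↑((e L).1 w) :=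
  stmt_2_general p h hadd hsmul hherm Wp Wm hcompl horth hdimp hpos hneg
end

section
/- With the notation of the previous statement, the bilinear form (x,y) ↦ ⟨x, J(τ)y⟩ on V is symmetric, and the associated quadratic form q_{J(τ)} is the orthogonal direct sum of the form Q_L^{L₁,L₃} on L₁ and the form −Q_L^{L₃,L₁} on L₃; in particular its signature equals sign(Q_L^{L₁,L₃}) − sign(Q_L^{L₃,L₁}). -/
/-- A Lagrangian of a symplectic vector space `(V, ω)` of dimension `2n` is an
`n`-dimensional subspace on which `ω` vanishes. -/
def IsLagrangian {V : Type*} [AddCommGroup V] [Module ℝ V]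
    (ω : V →ₗ[ℝ] V →ₗ[ℝ] ℝ) (n : ℕ) (L : Submodule ℝ V) : Prop :=
  Module.finrank ℝ L = n ∧ ∀ x ∈ L, ∀ y ∈ L, ω x y = 0

/-!
Write `x = x₁ + x₃` along `V = L₁ ⊕ L₃`. Since `L₁` and `L₃` are isotropic, the cross terms of
`⟨x, J y⟩` vanish and `⟨x, J y⟩ = ⟨x₁, T₁₃ y₁⟩ - ⟨x₃, T₃₁ y₃⟩`. Each of the two summands is
symmetric because `L` is isotropic and contains the graphs of `T₁₃` and `T₃₁`: expanding
`⟨a + T₁₃ a, a' + T₁₃ a'⟩ = 0` leaves only `⟨a, T₁₃ a'⟩ - ⟨a', T₁₃ a⟩`.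
-/

section

variable {R V : Type*} [CommRing R] [AddCommGroup V] [Module R V]

namespace Submodule

variable {p q : Submodule R V}

/-- The block form `(0, -B; A, 0)` with respect to `V = p ⊕ q`; `J(τ)` is the case
`A = T₁₃`, `B = T₃₁`. -/
noncomputable def blockAntidiag (h : IsCompl p q) (A : p →ₗ[R] q) (B : q →ₗ[R] p) : V →ₗ[R] V :=
  q.subtype ∘ₗ A ∘ₗ p.projectionOnto q h - p.subtype ∘ₗ B ∘ₗ q.projectionOnto p h.symm

variable (h : IsCompl p q) (A : p →ₗ[R] q) (B : q →ₗ[R] p)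

theorem blockAntidiag_apply (x : V) :
    blockAntidiag h A B x =
      (A (p.projectionOnto q h x) : V) - B (q.projectionOnto p h.symm x) :=
  rfl

theorem blockAntidiag_apply_left (x : p) : blockAntidiag h A B x = A x := by
  simp [blockAntidiag_apply]

theorem blockAntidiag_apply_right (y : q) : blockAntidiag h A B y = -(B y : V) := by
  simp [blockAntidiag_apply]

end Submodule

namespace LinearMap.IsAlt

open Submodule

variable {ω : V →ₗ[R] V →ₗ[R] R} {p q L : Submodule R V}

theorem apply_comm_of_graph_le (hω : ω.IsAlt) (hp : ∀ x ∈ p, ∀ y ∈ p, ω x y = 0)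
    (hq : ∀ x ∈ q, ∀ y ∈ q, ω x y = 0) (hL : ∀ x ∈ L, ∀ y ∈ L, ω x y = 0)
    {T : p →ₗ[R] q} (hT : ∀ x : p, (x : V) + T x ∈ L) (x x' : p) :
    ω x (T x') = ω x' (T x) := by
  have h := hL _ (hT x) _ (hT x')
  simp only [map_add, LinearMap.add_apply, hp _ x.2 _ x'.2, hq _ (T x).2 _ (T x').2] at h
  linear_combination h + hω.neg (T x : V) x'

theorem apply_blockAntidiag (hp : ∀ x ∈ p, ∀ y ∈ p, ω x y = 0)
    (hq : ∀ x ∈ q, ∀ y ∈ q, ω x y = 0) (h : IsCompl p q) (A : p →ₗ[R] q) (B : q →ₗ[R] p)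
    (x y : V) :
    ω x (blockAntidiag h A B y) =
      ω (p.projectionOnto q h x) (A (p.projectionOnto q h y)) -
        ω (q.projectionOnto p h.symm x) (B (q.projectionOnto p h.symm y)) := by
  conv_lhs => rw [← projection_add_projection_eq_self h x]
  simp only [blockAntidiag_apply, projection_apply, map_add, map_sub, LinearMap.add_apply,
    hq _ (q.projectionOnto p h.symm x).2 _ (A _).2, hp _ (p.projectionOnto q h x).2 _ (B _).2]
  ring

theorem apply_blockAntidiag_comm (hω : ω.IsAlt) (hp : ∀ x ∈ p, ∀ y ∈ p, ω x y = 0)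
    (hq : ∀ x ∈ q, ∀ y ∈ q, ω x y = 0) (hL : ∀ x ∈ L, ∀ y ∈ L, ω x y = 0)
    (h : IsCompl p q) {A : p →ₗ[R] q} {B : q →ₗ[R] p}
    (hA : ∀ x : p, (x : V) + A x ∈ L) (hB : ∀ y : q, (y : V) + B y ∈ L) (x y : V) :
    ω x (blockAntidiag h A B y) = ω y (blockAntidiag h A B x) := by
  rw [apply_blockAntidiag hp hq, apply_blockAntidiag hp hq,
    hω.apply_comm_of_graph_le hp hq hL hA, hω.apply_comm_of_graph_le hq hp hL hB]

end LinearMap.IsAlt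

end

theorem stmt_10_general
    {V : Type*} [AddCommGroup V] [Module ℝ V]
    (n : ℕ)
    (ω : V →ₗ[ℝ] V →ₗ[ℝ] ℝ)
    (halt : ∀ x : V, ω x x = 0)
    (L₁ L₃ L : Submodule ℝ V)
    (hL₁ : IsLagrangian ω n L₁) (hL₃ : IsLagrangian ω n L₃)
    (hL : IsLagrangian ω n L)
    (hcompl : IsCompl L₁ L₃)
    (T₁₃ : ↥L₁ →ₗ[ℝ] ↥L₃)
    (hT₁₃ : ∀ x : V, x ∈ L ↔ ∃ a : ↥L₁, x = ↑a + ↑(T₁₃ a))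
    (T₃₁ : ↥L₃ →ₗ[ℝ] ↥L₁)
    (hT₃₁ : ∀ x : V, x ∈ L ↔ ∃ c : ↥L₃, x = ↑c + ↑(T₃₁ c))
    (J : V →ₗ[ℝ] V)
    (hJ : J = L₃.subtype.comp (T₁₃.comp (L₁.linearProjOfIsCompl L₃ hcompl)) -
      L₁.subtype.comp (T₃₁.comp (L₃.linearProjOfIsCompl L₁ hcompl.symm))) :
    (∀ x y : V, ω x (J y) = ω y (J x)) ∧
    (∀ (a : ↥L₁) (b : ↥L₃), ω ↑a (J ↑b) = 0) ∧
    (∀ a : ↥L₁, ω ↑a (J ↑a) = ω ↑a ↑(T₁₃ a)) ∧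
    (∀ b : ↥L₃, ω ↑b (J ↑b) = -(ω ↑b ↑(T₃₁ b))) := by
  obtain rfl : J = Submodule.blockAntidiag hcompl T₁₃ T₃₁ := hJ
  have graph₁₃ (a : L₁) : (a : V) + T₁₃ a ∈ L := (hT₁₃ _).2 ⟨a, rfl⟩
  have graph₃₁ (b : L₃) : (b : V) + T₃₁ b ∈ L := (hT₃₁ _).2 ⟨b, rfl⟩
  refine ⟨LinearMap.IsAlt.apply_blockAntidiag_comm halt hL₁.2 hL₃.2 hL.2 hcompl graph₁₃ graph₃₁,
    fun a b => ?_, fun a => ?_, fun b => ?_⟩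
  · rw [Submodule.blockAntidiag_apply_right, map_neg, hL₁.2 _ a.2 _ (T₃₁ b).2, neg_zero]
  · rw [Submodule.blockAntidiag_apply_left]
  · rw [Submodule.blockAntidiag_apply_right, map_neg]

/-- With `J = J(τ)` the complex structure associated to a triple
`τ = (L₁, L, L₃)` of pairwise transverse Lagrangians (block form
`(0, −T₃₁; T₁₃, 0)` w.r.t. `V = L₁ ⊕ L₃`), the bilinear form
`(x,y) ↦ ⟨x, J y⟩` is symmetric, and the associated quadratic form
`q_J(x) = ⟨x, J x⟩` is the orthogonal direct sum of `Q_L^{L₁,L₃}` on `L₁` and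
`−Q_L^{L₃,L₁}` on `L₃`: `L₁ ⊥ L₃` for this form, on `L₁` it is
`a ↦ ⟨a, T₁₃ a⟩`, and on `L₃` it is `b ↦ −⟨b, T₃₁ b⟩`. -/
theorem stmt_10
    {V : Type*} [AddCommGroup V] [Module ℝ V] [FiniteDimensional ℝ V]
    (n : ℕ)
    (ω : V →ₗ[ℝ] V →ₗ[ℝ] ℝ)
    (halt : ∀ x : V, ω x x = 0)
    (hnd : ∀ x : V, x ≠ 0 → ∃ y : V, ω x y ≠ 0)
    (hdim : Module.finrank ℝ V = 2 * n)
    (L₁ L₃ L : Submodule ℝ V)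
    (hL₁ : IsLagrangian ω n L₁) (hL₃ : IsLagrangian ω n L₃)
    (hL : IsLagrangian ω n L)
    (hcompl : IsCompl L₁ L₃)
    (htr₁ : L ⊓ L₁ = ⊥) (htr₃ : L ⊓ L₃ = ⊥)
    (T₁₃ : ↥L₁ →ₗ[ℝ] ↥L₃)
    (hT₁₃ : ∀ x : V, x ∈ L ↔ ∃ a : ↥L₁, x = ↑a + ↑(T₁₃ a))
    (T₃₁ : ↥L₃ →ₗ[ℝ] ↥L₁)
    (hT₃₁ : ∀ x : V, x ∈ L ↔ ∃ c : ↥L₃, x = ↑c + ↑(T₃₁ c))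
    (J : V →ₗ[ℝ] V)
    (hJ : J = L₃.subtype.comp (T₁₃.comp (L₁.linearProjOfIsCompl L₃ hcompl)) -
      L₁.subtype.comp (T₃₁.comp (L₃.linearProjOfIsCompl L₁ hcompl.symm))) :
    (∀ x y : V, ω x (J y) = ω y (J x)) ∧
    (∀ (a : ↥L₁) (b : ↥L₃), ω ↑a (J ↑b) = 0) ∧
    (∀ a : ↥L₁, ω ↑a (J ↑a) = ω ↑a ↑(T₁₃ a)) ∧
    (∀ b : ↥L₃, ω ↑b (J ↑b) = -(ω ↑b ↑(T₃₁ b))) :=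
  stmt_10_general n ω halt L₁ L₃ L hL₁ hL₃ hL hcompl T₁₃ hT₁₃ T₃₁ hT₃₁ J hJ
end

section
/- Let (L₀, L₁, L₂, L_∞) be a quadruple of pairwise transverse Lagrangians in a symplectic vector space V. Then for every ℓ₀ ∈ L₀, with ℓ_∞ ∈ L_∞ defined by ℓ₀ + ℓ_∞ ∈ L₁, one has Q_{L₂}^{L₀,L_∞}(ℓ₀) − Q_{L₁}^{L₀,L_∞}(ℓ₀) = Q_{L₂}^{L₁,L_∞}(ℓ₀ + ℓ_∞). -/
/-! Decomposing `b + S b ∈ L₂` along `V = L₀ ⊕ L_∞` shows `T₁ a + S b = T₂ a`. Since `ω` vanishes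
on `L_∞`, pairing with `b = a + T₁ a` only sees the `L₀`-component `a`, which gives the identity. -/

section GraphMap

variable {V : Type*} [AddCommGroup V] [Module ℝ V]

theorem Submodule.eq_of_add_mem_graph {L₀ L Linf : Submodule ℝ V} (h0inf : L₀ ⊓ Linf = ⊥)
    {T : ↥L₀ →ₗ[ℝ] ↥Linf} (hT : ∀ x : V, x ∈ L → ∃ a : ↥L₀, x = ↑a + ↑(T a))
    {a : ↥L₀} {u : ↥Linf} (hu : (a : V) + u ∈ L) : u = T a := by
  obtain ⟨a', ha'⟩ := hT _ hu
  have hmem : (a : V) - a' ∈ L₀ ⊓ Linf := by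
    refine ⟨sub_mem a.2 a'.2, ?_⟩
    rw [show (a : V) - a' = (T a' : V) - u by linear_combination (norm := abel) ha']
    exact sub_mem (T a').2 u.2
  rw [h0inf, Submodule.mem_bot, sub_eq_zero, ← Subtype.ext_iff] at hmem
  subst hmem
  exact Subtype.ext (by linear_combination (norm := abel) ha')

theorem LinearMap.apply_add_apply_sub_of_isotropic (ω : V →ₗ[ℝ] V →ₗ[ℝ] ℝ) {L : Submodule ℝ V}
    (hL : ∀ x ∈ L, ∀ y ∈ L, ω x y = 0) (x : V) {t s : V} (ht : t ∈ L) (hs : s ∈ L) :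
    ω (x + t) (s - t) = ω x s - ω x t := by
  simp only [map_add, map_sub, LinearMap.add_apply, hL t ht s hs, hL t ht t ht]
  ring

end GraphMap

theorem stmt_11_general
    {V : Type*} [AddCommGroup V] [Module ℝ V]
    (n : ℕ)
    (ω : V →ₗ[ℝ] V →ₗ[ℝ] ℝ)
    (L₀ L₁ L₂ Linf : Submodule ℝ V)
    (hLinf : IsLagrangian ω n Linf)
    (h0inf : L₀ ⊓ Linf = ⊥)
    (T₁ : ↥L₀ →ₗ[ℝ] ↥Linf)
    (T₂ : ↥L₀ →ₗ[ℝ] ↥Linf)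
    (hT₂ : ∀ x : V, x ∈ L₂ ↔ ∃ a : ↥L₀, x = ↑a + ↑(T₂ a))
    (S : ↥L₁ →ₗ[ℝ] ↥Linf)
    (hS : ∀ x : V, x ∈ L₂ ↔ ∃ b : ↥L₁, x = ↑b + ↑(S b)) :
    ∀ (a : ↥L₀) (b : ↥L₁), (↑b : V) = ↑a + ↑(T₁ a) →
      ω ↑a ↑(T₂ a) - ω ↑a ↑(T₁ a) = ω ↑b ↑(S b) := by
  intro a b hb
  have hgraph : T₁ a + S b = T₂ a := by
    refine Submodule.eq_of_add_mem_graph h0inf (fun x hx => (hT₂ x).1 hx) ?_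
    rw [Submodule.coe_add, ← add_assoc, ← hb]
    exact (hS _).2 ⟨b, rfl⟩
  have hSb : (S b : V) = T₂ a - T₁ a := by
    rw [← hgraph, Submodule.coe_add, add_sub_cancel_left]
  rw [hb, hSb, LinearMap.apply_add_apply_sub_of_isotropic ω hLinf.2 _ (T₁ a).2 (T₂ a).2]

/-- Let `(L₀, L₁, L₂, L_∞)` be a quadruple of pairwise transverse Lagrangians,
with graph maps `T₁, T₂ : L₀ → L_∞` determined by `L₁, L₂` (w.r.t. the
decomposition `V = L₀ ⊕ L_∞`) and `S : L₁ → L_∞` determined by `L₂`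
(w.r.t. `V = L₁ ⊕ L_∞`).  Then for every `ℓ₀ ∈ L₀`, with `ℓ_∞ = T₁(ℓ₀)` (so
that `ℓ₀ + ℓ_∞ ∈ L₁`), one has
`Q_{L₂}^{L₀,L_∞}(ℓ₀) − Q_{L₁}^{L₀,L_∞}(ℓ₀) = Q_{L₂}^{L₁,L_∞}(ℓ₀ + ℓ_∞)`. -/
theorem stmt_11
    {V : Type*} [AddCommGroup V] [Module ℝ V] [FiniteDimensional ℝ V]
    (n : ℕ)
    (ω : V →ₗ[ℝ] V →ₗ[ℝ] ℝ)
    (halt : ∀ x : V, ω x x = 0)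
    (hnd : ∀ x : V, x ≠ 0 → ∃ y : V, ω x y ≠ 0)
    (hdim : Module.finrank ℝ V = 2 * n)
    (L₀ L₁ L₂ Linf : Submodule ℝ V)
    (hL₀ : IsLagrangian ω n L₀) (hL₁ : IsLagrangian ω n L₁)
    (hL₂ : IsLagrangian ω n L₂) (hLinf : IsLagrangian ω n Linf)
    (h01 : L₀ ⊓ L₁ = ⊥) (h02 : L₀ ⊓ L₂ = ⊥) (h0inf : L₀ ⊓ Linf = ⊥)
    (h12 : L₁ ⊓ L₂ = ⊥) (h1inf : L₁ ⊓ Linf = ⊥) (h2inf : L₂ ⊓ Linf = ⊥)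
    (T₁ : ↥L₀ →ₗ[ℝ] ↥Linf)
    (hT₁ : ∀ x : V, x ∈ L₁ ↔ ∃ a : ↥L₀, x = ↑a + ↑(T₁ a))
    (T₂ : ↥L₀ →ₗ[ℝ] ↥Linf)
    (hT₂ : ∀ x : V, x ∈ L₂ ↔ ∃ a : ↥L₀, x = ↑a + ↑(T₂ a))
    (S : ↥L₁ →ₗ[ℝ] ↥Linf)
    (hS : ∀ x : V, x ∈ L₂ ↔ ∃ b : ↥L₁, x = ↑b + ↑(S b)) :
    ∀ (a : ↥L₀) (b : ↥L₁), (↑b : V) = ↑a + ↑(T₁ a) →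
      ω ↑a ↑(T₂ a) - ω ↑a ↑(T₁ a) = ω ↑b ↑(S b) :=
  stmt_11_general n ω L₀ L₁ L₂ Linf hLinf h0inf T₁ T₂ hT₂ S hS
end

section
/- Let (L₀, L₁, L₂, L_∞) be a quadruple of pairwise transverse Lagrangians in a symplectic vector space V, and assume that the quadratic forms Q_{L₁}^{L₀,L_∞} (on L₀) and Q_{L₂}^{L₁,L_∞} (on L₁) are positive definite. Then as quadratic forms on L₀ one has 0 < Q_{L₁}^{L₀,L_∞} < Q_{L₂}^{L₀,L_∞}, i.e. Q_{L₂}^{L₀,L_∞} − Q_{L₁}^{L₀,L_∞} is positive definite. -/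
namespace Submodule

variable {R M : Type*} [Ring R] [AddCommGroup M] [Module R M]

theorem eq_and_eq_of_add_eq_add_of_disjoint {A B : Submodule R M} (hAB : Disjoint A B)
    {a a' t t' : M} (ha : a ∈ A) (ha' : a' ∈ A) (ht : t ∈ B) (ht' : t' ∈ B)
    (h : a + t = a' + t') : a = a' ∧ t = t' := by
  have hsum : (a - a') + (t - t') = 0 := by rw [← sub_eq_zero] at h; rw [← h]; abel
  obtain ⟨h₁, h₂⟩ :=
    disjoint_iff_add_eq_zero.mp hAB (sub_mem ha ha') (sub_mem ht ht') hsum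
  exact ⟨sub_eq_zero.mp h₁, sub_eq_zero.mp h₂⟩

theorem add_ne_zero_of_disjoint {A B : Submodule R M} (hAB : Disjoint A B)
    {a t : M} (ha : a ∈ A) (ht : t ∈ B) (ha0 : a ≠ 0) : a + t ≠ 0 := fun h =>
  ha0 (disjoint_iff_add_eq_zero.mp hAB ha ht h).1

end Submodule

section GraphComposition

variable {V : Type*} [AddCommGroup V] [Module ℝ V] {A B L₁ L₂ : Submodule ℝ V}

theorem graph_comp_eq_add {T₁ T₂ : A →ₗ[ℝ] B} {S : L₁ →ₗ[ℝ] B} (hAB : Disjoint A B)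
    (hT₁ : ∀ a : A, (a : V) + T₁ a ∈ L₁) (hT₂ : ∀ x ∈ L₂, ∃ a : A, x = a + T₂ a)
    (hS : ∀ b : L₁, (b : V) + S b ∈ L₂) (a : A) :
    (T₂ a : V) = T₁ a + S ⟨a + T₁ a, hT₁ a⟩ := by
  set b : L₁ := ⟨a + T₁ a, hT₁ a⟩
  obtain ⟨a', hb⟩ := hT₂ _ (hS b)
  have hsplit : (a : V) + (T₁ a + S b) = a' + T₂ a' := by rw [← hb]; exact (add_assoc _ _ _).symm
  obtain ⟨haa', hT⟩ := Submodule.eq_and_eq_of_add_eq_add_of_disjoint hAB a.2 a'.2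
    (add_mem (T₁ a).2 (S b).2) (T₂ a').2 hsplit
  rw [hT, Subtype.ext haa']

theorem form_graph_comp_sub {ω : V →ₗ[ℝ] V →ₗ[ℝ] ℝ} (hB : ∀ x ∈ B, ∀ y ∈ B, ω x y = 0)
    {T₁ T₂ : A →ₗ[ℝ] B} {S : L₁ →ₗ[ℝ] B} (hAB : Disjoint A B)
    (hT₁ : ∀ a : A, (a : V) + T₁ a ∈ L₁) (hT₂ : ∀ x ∈ L₂, ∃ a : A, x = a + T₂ a)
    (hS : ∀ b : L₁, (b : V) + S b ∈ L₂) (a : A) :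
    ω a (T₂ a) - ω a (T₁ a) = ω (a + T₁ a) (S ⟨a + T₁ a, hT₁ a⟩) := by
  have hiso : ω (T₁ a) (S ⟨a + T₁ a, hT₁ a⟩) = 0 := hB _ (T₁ a).2 _ (S _).2
  rw [graph_comp_eq_add hAB hT₁ hT₂ hS a, map_add, map_add, LinearMap.add_apply, hiso]
  ring

end GraphComposition

theorem stmt_12_general
    {V : Type*} [AddCommGroup V] [Module ℝ V]
    (n : ℕ)
    (ω : V →ₗ[ℝ] V →ₗ[ℝ] ℝ)
    (L₀ L₁ L₂ Linf : Submodule ℝ V)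
    (hLinf : IsLagrangian ω n Linf)
    (h0inf : L₀ ⊓ Linf = ⊥)
    (T₁ : ↥L₀ →ₗ[ℝ] ↥Linf)
    (hT₁ : ∀ x : V, x ∈ L₁ ↔ ∃ a : ↥L₀, x = ↑a + ↑(T₁ a))
    (T₂ : ↥L₀ →ₗ[ℝ] ↥Linf)
    (hT₂ : ∀ x : V, x ∈ L₂ ↔ ∃ a : ↥L₀, x = ↑a + ↑(T₂ a))
    (S : ↥L₁ →ₗ[ℝ] ↥Linf)
    (hS : ∀ x : V, x ∈ L₂ ↔ ∃ b : ↥L₁, x = ↑b + ↑(S b))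
    (hQ₁pos : ∀ a : ↥L₀, a ≠ 0 → 0 < ω ↑a ↑(T₁ a))
    (hSpos : ∀ b : ↥L₁, b ≠ 0 → 0 < ω ↑b ↑(S b)) :
    (∀ a : ↥L₀, a ≠ 0 → 0 < ω ↑a ↑(T₁ a)) ∧
    (∀ a : ↥L₀, a ≠ 0 → 0 < ω ↑a ↑(T₂ a) - ω ↑a ↑(T₁ a)) := by
  refine ⟨hQ₁pos, fun a ha => ?_⟩
  have hdisj : Disjoint L₀ Linf := disjoint_iff.mpr h0inf
  have hgraph₁ : ∀ a : L₀, (a : V) + T₁ a ∈ L₁ := fun a => (hT₁ _).mpr ⟨a, rfl⟩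
  have hb : (⟨a + T₁ a, hgraph₁ a⟩ : L₁) ≠ 0 := fun h =>
    Submodule.add_ne_zero_of_disjoint hdisj a.2 (T₁ a).2 (by exact_mod_cast ha)
      (congrArg Subtype.val h)
  rw [form_graph_comp_sub hLinf.2 hdisj hgraph₁ (fun x hx => (hT₂ x).mp hx)
    (fun b => (hS _).mpr ⟨b, rfl⟩) a]
  exact hSpos _ hb

/-- (Monotonicity.)  Let `(L₀, L₁, L₂, L_∞)` be a quadruple of pairwise
transverse Lagrangians, and assume the quadratic forms `Q_{L₁}^{L₀,L_∞}`
(on `L₀`) and `Q_{L₂}^{L₁,L_∞}` (on `L₁`) are positive definite.  Then, as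
quadratic forms on `L₀`, `0 < Q_{L₁}^{L₀,L_∞} < Q_{L₂}^{L₀,L_∞}`: i.e.
`Q_{L₁}^{L₀,L_∞}` and the difference `Q_{L₂}^{L₀,L_∞} − Q_{L₁}^{L₀,L_∞}` are
positive definite. -/
theorem stmt_12
    {V : Type*} [AddCommGroup V] [Module ℝ V] [FiniteDimensional ℝ V]
    (n : ℕ)
    (ω : V →ₗ[ℝ] V →ₗ[ℝ] ℝ)
    (halt : ∀ x : V, ω x x = 0)
    (hnd : ∀ x : V, x ≠ 0 → ∃ y : V, ω x y ≠ 0)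
    (hdim : Module.finrank ℝ V = 2 * n)
    (L₀ L₁ L₂ Linf : Submodule ℝ V)
    (hL₀ : IsLagrangian ω n L₀) (hL₁ : IsLagrangian ω n L₁)
    (hL₂ : IsLagrangian ω n L₂) (hLinf : IsLagrangian ω n Linf)
    (h01 : L₀ ⊓ L₁ = ⊥) (h02 : L₀ ⊓ L₂ = ⊥) (h0inf : L₀ ⊓ Linf = ⊥)
    (h12 : L₁ ⊓ L₂ = ⊥) (h1inf : L₁ ⊓ Linf = ⊥) (h2inf : L₂ ⊓ Linf = ⊥)
    (T₁ : ↥L₀ →ₗ[ℝ] ↥Linf)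
    (hT₁ : ∀ x : V, x ∈ L₁ ↔ ∃ a : ↥L₀, x = ↑a + ↑(T₁ a))
    (T₂ : ↥L₀ →ₗ[ℝ] ↥Linf)
    (hT₂ : ∀ x : V, x ∈ L₂ ↔ ∃ a : ↥L₀, x = ↑a + ↑(T₂ a))
    (S : ↥L₁ →ₗ[ℝ] ↥Linf)
    (hS : ∀ x : V, x ∈ L₂ ↔ ∃ b : ↥L₁, x = ↑b + ↑(S b))
    (hQ₁pos : ∀ a : ↥L₀, a ≠ 0 → 0 < ω ↑a ↑(T₁ a))
    (hSpos : ∀ b : ↥L₁, b ≠ 0 → 0 < ω ↑b ↑(S b)) :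
    (∀ a : ↥L₀, a ≠ 0 → 0 < ω ↑a ↑(T₁ a)) ∧
    (∀ a : ↥L₀, a ≠ 0 → 0 < ω ↑a ↑(T₂ a) - ω ↑a ↑(T₁ a)) :=
  stmt_12_general n ω L₀ L₁ L₂ Linf hLinf h0inf T₁ hT₁ T₂ hT₂ S hS hQ₁pos hSpos
end

section
/- Let E be a finite-dimensional real inner product space and C ⊆ E an open convex cone which is acute, meaning ⟨u, v⟩ ≥ 0 for all u, v in the closure of C. Then for every e ∈ C, the infimum over nonzero x ∈ C of ⟨x, e⟩ / ‖x‖ is strictly positive. -/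
open scoped RealInnerProductSpace

/-!
If the ball of radius `r` about `e` lies in `C`, then acuteness applied to `x` and
`e - (r / ‖x‖) • x ∈ C` gives `⟪x, e⟫ ≥ r ‖x‖`, so `r` is a uniform lower bound.
-/

theorem mul_norm_le_inner_of_forall_mem_closedBall_nonneg {E : Type*}
    [NormedAddCommGroup E] [InnerProductSpace ℝ E] {x e : E} {r : ℝ} (hr : 0 ≤ r)
    (h : ∀ v ∈ Metric.closedBall e r, 0 ≤ ⟪x, v⟫) : r * ‖x‖ ≤ ⟪x, e⟫ := by
  rcases eq_or_ne x 0 with rfl | hx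
  · simp
  have hx' : 0 < ‖x‖ := norm_pos_iff.2 hx
  have hv : e - (r / ‖x‖) • x ∈ Metric.closedBall e r := by
    rw [Metric.mem_closedBall, dist_eq_norm, sub_sub_cancel_left, norm_neg, norm_smul,
      Real.norm_of_nonneg (div_nonneg hr hx'.le), div_mul_cancel₀ r hx'.ne']
  have key := h _ hv
  rw [inner_sub_right, real_inner_smul_right, real_inner_self_eq_norm_sq] at key
  have hcancel : r / ‖x‖ * ‖x‖ ^ 2 = r * ‖x‖ := by field_simp
  linarith

theorem stmt_13_general
    {E : Type*} [NormedAddCommGroup E] [InnerProductSpace ℝ E]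
    (C : Set E) (hopen : IsOpen C)
    (hacute : ∀ u ∈ closure C, ∀ v ∈ closure C, 0 ≤ ⟪u, v⟫)
    (e : E) (he : e ∈ C) :
    ∃ k : ℝ, 0 < k ∧ ∀ x ∈ C, x ≠ 0 → k ≤ ⟪x, e⟫ / ‖x‖ := by
  obtain ⟨r, hr, hball⟩ := Metric.nhds_basis_closedBall.mem_iff.1 (hopen.mem_nhds he)
  refine ⟨r, hr, fun x hx hx0 => ?_⟩
  rw [le_div_iff₀ (norm_pos_iff.2 hx0)]
  exact mul_norm_le_inner_of_forall_mem_closedBall_nonneg hr.le fun v hv =>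
    hacute x (subset_closure hx) v (subset_closure (hball hv))

/-- Let `E` be a finite-dimensional real inner product space and `C ⊆ E` an
open convex cone which is acute (`⟪u, v⟫ ≥ 0` for all `u, v` in the closure of
`C`).  Then for every `e ∈ C` the infimum over nonzero `x ∈ C` of
`⟪x, e⟫ / ‖x‖` is strictly positive: there is `k > 0` with
`k ≤ ⟪x, e⟫ / ‖x‖` for all nonzero `x ∈ C`. -/
theorem stmt_13
    {E : Type*} [NormedAddCommGroup E] [InnerProductSpace ℝ E]
    [FiniteDimensional ℝ E]
    (C : Set E) (hopen : IsOpen C) (hconv : Convex ℝ C) (hne : C.Nonempty)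
    (hcone : ∀ x ∈ C, ∀ t : ℝ, 0 < t → t • x ∈ C)
    (hacute : ∀ u ∈ closure C, ∀ v ∈ closure C, 0 ≤ ⟪u, v⟫)
    (e : E) (he : e ∈ C) :
    ∃ k : ℝ, 0 < k ∧ ∀ x ∈ C, x ≠ 0 → k ≤ ⟪x, e⟫ / ‖x‖ :=
  stmt_13_general C hopen hacute e he
end
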